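/- arXiv:2604.01570 — 2 statements merged into one kernel-verified Lean document; each statement's English description precedes it below -/
import Mathlib

section
/- Let A be a finite nonempty set, let Q : A → ℝ, let p and r be strictly positive probability mass functions on A, and let α, β > 0. Then the probability mass function π*(a) ∝ r(a)^{α/(α+β)} · p(a)^{β/(α+β)} · exp(Q(a)/(α+β)) is the unique maximizer over all probability mass functions π of F(π) = Σ_a π(a)·Q(a) − α·D_KL(π‖r) − β·D_KL(π‖p). -/
open Real Finset

lemma gibbs_le_aux {x y : ℝ} (hx : 0 ≤ x) (hy : 0 < y) :
    x - y ≤ x * Real.log (x / y) := by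
  rcases eq_or_lt_of_le hx with h | h
  · rw [← h]; simp; linarith
  · have h1 : Real.log (y / x) ≤ y / x - 1 := Real.log_le_sub_one_of_pos (by positivity)
    have h2 : Real.log (y / x) = - Real.log (x / y) := by
      rw [← Real.log_inv]; congr 1; field_simp
    rw [h2] at h1
    have h3 := mul_le_mul_of_nonneg_left h1 h.le
    have h4 : x * (y / x - 1) = y - x := by field_simp
    rw [h4] at h3
    nlinarith

lemma gibbs_lt_aux {x y : ℝ} (hx : 0 ≤ x) (hy : 0 < y) (hne : x ≠ y) :
    x - y < x * Real.log (x / y) := by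
  rcases eq_or_lt_of_le hx with h | h
  · rw [← h]; simp; linarith
  · have hne1 : y / x ≠ 1 := by
      intro hc
      apply hne
      field_simp at hc
      linarith
    have h1 : Real.log (y / x) < y / x - 1 :=
      Real.log_lt_sub_one_of_pos (by positivity) hne1
    have h2 : Real.log (y / x) = - Real.log (x / y) := by
      rw [← Real.log_inv]; congr 1; field_simp
    rw [h2] at h1
    have h3 := mul_lt_mul_of_pos_left h1 h
    have h4 : x * (y / x - 1) = y - x := by field_simp
    rw [h4] at h3
    nlinarith

theorem kl_double_regularized_unique_maximizer
    {A : Type*} [Fintype A] [Nonempty A]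
    (Q p r : A → ℝ) (hp : ∀ a, 0 < p a) (hp1 : ∑ a, p a = 1)
    (hr : ∀ a, 0 < r a) (hr1 : ∑ a, r a = 1)
    (α β : ℝ) (hα : 0 < α) (hβ : 0 < β)
    (Z : ℝ)
    (hZ : Z = ∑ a, (r a) ^ (α / (α + β)) * (p a) ^ (β / (α + β)) *
      Real.exp (Q a / (α + β)))
    (πs : A → ℝ)
    (hpis : ∀ a, πs a = (r a) ^ (α / (α + β)) * (p a) ^ (β / (α + β)) *
      Real.exp (Q a / (α + β)) / Z) :
    ∀ pi : A → ℝ, (∀ a, 0 ≤ pi a) → (∑ a, pi a = 1) →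
      ((∑ a, pi a * Q a) - α * (∑ a, pi a * Real.log (pi a / r a))
          - β * (∑ a, pi a * Real.log (pi a / p a))
        ≤ (∑ a, πs a * Q a) - α * (∑ a, πs a * Real.log (πs a / r a))
          - β * (∑ a, πs a * Real.log (πs a / p a)))
      ∧ (((∑ a, pi a * Q a) - α * (∑ a, pi a * Real.log (pi a / r a))
          - β * (∑ a, pi a * Real.log (pi a / p a))
        = (∑ a, πs a * Q a) - α * (∑ a, πs a * Real.log (πs a / r a))
          - β * (∑ a, πs a * Real.log (πs a / p a))) → pi = πs) := by
  have hs : (0:ℝ) < α + β := by linarith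
  have hZpos : 0 < Z := by
    rw [hZ]
    apply Finset.sum_pos
    · intro a _
      have := hr a; have := hp a
      positivity
    · exact Finset.univ_nonempty
  have hπs_pos : ∀ a, 0 < πs a := by
    intro a
    rw [hpis a]
    have := hr a; have := hp a
    positivity
  have hπs1 : ∑ a, πs a = 1 := by
    have : ∑ a, πs a = (∑ a, (r a) ^ (α / (α + β)) * (p a) ^ (β / (α + β)) *
        Real.exp (Q a / (α + β))) / Z := by
      rw [Finset.sum_div]
      exact Finset.sum_congr rfl fun a _ => hpis a
    rw [this, ← hZ, div_self (ne_of_gt hZpos)]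
  have hlogπs : ∀ a, Real.log (πs a) =
      (Q a + α * Real.log (r a) + β * Real.log (p a)) / (α + β) - Real.log Z := by
    intro a
    have h1 := hr a
    have h2 := hp a
    rw [hpis a]
    rw [Real.log_div (by positivity) (ne_of_gt hZpos),
      Real.log_mul (by positivity) (Real.exp_ne_zero _),
      Real.log_mul (by positivity) (by positivity),
      Real.log_rpow (hr a), Real.log_rpow (hp a), Real.log_exp]
    field_simp
    ring
  -- key termwise identity
  have key : ∀ (x : ℝ), 0 ≤ x → ∀ a,
      x * Q a - α * (x * Real.log (x / r a)) - β * (x * Real.log (x / p a))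
        = (α + β) * Real.log Z * x
          - (α + β) * (x * Real.log (x / πs a)) := by
    intro x hx a
    rcases eq_or_lt_of_le hx with h | h
    · rw [← h]; ring
    · rw [Real.log_div (ne_of_gt h) (ne_of_gt (hr a)),
        Real.log_div (ne_of_gt h) (ne_of_gt (hp a)),
        Real.log_div (ne_of_gt h) (ne_of_gt (hπs_pos a)),
        hlogπs a]
      field_simp
      ring
  -- sum identity
  have sumid : ∀ (f : A → ℝ), (∀ a, 0 ≤ f a) →
      (∑ a, f a * Q a) - α * (∑ a, f a * Real.log (f a / r a))
        - β * (∑ a, f a * Real.log (f a / p a))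
      = (α + β) * Real.log Z * (∑ a, f a)
        - (α + β) * (∑ a, f a * Real.log (f a / πs a)) := by
    intro f hf
    rw [Finset.mul_sum, Finset.mul_sum, ← Finset.sum_sub_distrib,
      ← Finset.sum_sub_distrib, Finset.mul_sum, Finset.mul_sum,
      ← Finset.sum_sub_distrib]
    exact Finset.sum_congr rfl fun a _ => key (f a) (hf a) a
  have hGstar : ∑ a, πs a * Real.log (πs a / πs a) = 0 := by
    apply Finset.sum_eq_zero
    intro a _
    rw [div_self (ne_of_gt (hπs_pos a))]
    simp
  intro pi hpi hpi1
  have hFpi := sumid pi hpi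
  have hFπs := sumid πs (fun a => (hπs_pos a).le)
  rw [hpi1] at hFpi
  rw [hπs1, hGstar] at hFπs
  set G : ℝ := ∑ a, pi a * Real.log (pi a / πs a) with hG
  -- G = sum of nonneg terms
  have hterm : ∀ a, 0 ≤ pi a * Real.log (pi a / πs a) - (pi a - πs a) := by
    intro a
    have := gibbs_le_aux (hpi a) (hπs_pos a)
    linarith
  have hGsplit : G = ∑ a, (pi a * Real.log (pi a / πs a) - (pi a - πs a)) := by
    rw [hG, Finset.sum_sub_distrib, Finset.sum_sub_distrib, hpi1, hπs1]
    ring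
  have hGnonneg : 0 ≤ G := by
    rw [hGsplit]
    exact Finset.sum_nonneg fun a _ => hterm a
  constructor
  · rw [hFpi, hFπs]
    nlinarith
  · intro heq
    rw [hFpi, hFπs] at heq
    have hG0 : G = 0 := by nlinarith
    have hall : ∀ a ∈ Finset.univ,
        pi a * Real.log (pi a / πs a) - (pi a - πs a) = 0 := by
      rw [hGsplit] at hG0
      exact (Finset.sum_eq_zero_iff_of_nonneg fun a _ => hterm a).mp hG0
    funext a
    by_contra hne
    have := gibbs_lt_aux (hpi a) (hπs_pos a) hne
    have h0 := hall a (Finset.mem_univ a)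
    linarith
end

section
/- Let A be a finite nonempty set, π_t a strictly positive probability mass function on A, Q : A → ℝ, and α, β > 0 with target distribution r strictly positive. Let π_{t+1}(a) ∝ r(a)^{α/(α+β)}·π_t(a)^{β/(α+β)}·exp(Q(a)/(α+β)). Then as β → ∞ (with α, Q, r, π_t fixed), π_{t+1}(a) → π_t(a) for every a ∈ A. -/
/-! As `β → ∞` the exponents `α / (α + β)` and `Q a / (α + β)` tend to `0` while `β / (α + β)`
tends to `1`, so each unnormalised weight tends to `πt a` and the normaliser to `∑ a, πt a = 1`. -/

open Real Filter Topology

lemma tendsto_const_div_add_atTop_nhds_zero (c α : ℝ) :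
    Tendsto (fun β : ℝ => c / (α + β)) atTop (𝓝 0) :=
  tendsto_const_nhds.div_atTop (tendsto_atTop_add_const_left _ _ tendsto_id)

lemma tendsto_div_const_add_atTop_nhds_one (α : ℝ) :
    Tendsto (fun β : ℝ => β / (α + β)) atTop (𝓝 1) := by
  have h : Tendsto (fun β : ℝ => 1 - α / (α + β)) atTop (𝓝 1) := by
    simpa using tendsto_const_nhds.sub (tendsto_const_div_add_atTop_nhds_zero α α)
  refine h.congr' ?_
  filter_upwards [eventually_gt_atTop (-α)] with β hβ
  field_simp [(by linarith : α + β ≠ 0)]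
  ring

lemma tendsto_rpow_mul_rpow_mul_exp_atTop {r : ℝ} (hr : r ≠ 0) (p q α : ℝ) :
    Tendsto (fun β : ℝ => r ^ (α / (α + β)) * p ^ (β / (α + β)) * exp (q / (α + β)))
      atTop (𝓝 p) := by
  have hr_pow : Tendsto (fun β : ℝ => r ^ (α / (α + β))) atTop (𝓝 1) := by
    simpa [Function.comp_def] using (continuousAt_const_rpow hr).tendsto.comp
      (tendsto_const_div_add_atTop_nhds_zero α α)
  have hp_pow : Tendsto (fun β : ℝ => p ^ (β / (α + β))) atTop (𝓝 p) := by
    simpa [Function.comp_def] using (continuousAt_const_rpow' one_ne_zero).tendsto.comp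
      (tendsto_div_const_add_atTop_nhds_one α)
  have hq_exp : Tendsto (fun β : ℝ => exp (q / (α + β))) atTop (𝓝 1) := by
    simpa using (tendsto_const_div_add_atTop_nhds_zero q α).rexp
  simpa using (hr_pow.mul hp_pow).mul hq_exp

lemma Filter.Tendsto.div_sum {ι α 𝕜 : Type*} [Fintype ι] [Field 𝕜] [TopologicalSpace 𝕜]
    [IsTopologicalDivisionRing 𝕜] {l : Filter α} {f : α → ι → 𝕜} {p : ι → 𝕜}
    (hf : ∀ i, Tendsto (fun x => f x i) l (𝓝 (p i))) (hp : ∑ i, p i ≠ 0) (i : ι) :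
    Tendsto (fun x => f x i / ∑ j, f x j) l (𝓝 (p i / ∑ j, p j)) :=
  (hf i).div (tendsto_finsetSum _ fun j _ => hf j) hp

theorem trust_region_limit_beta_general
    {A : Type*} [Fintype A]
    (πt r : A → ℝ) (hπt1 : ∑ a, πt a = 1)
    (hr : ∀ a, 0 < r a)
    (Q : A → ℝ) (α : ℝ)
    (πnext : ℝ → A → ℝ)
    (hπnext : ∀ β a, πnext β a =
      (r a) ^ (α / (α + β)) * (πt a) ^ (β / (α + β)) * Real.exp (Q a / (α + β))
        / ∑ a', (r a') ^ (α / (α + β)) * (πt a') ^ (β / (α + β)) *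
            Real.exp (Q a' / (α + β))) :
    ∀ a, Filter.Tendsto (fun β => πnext β a) Filter.atTop (nhds (πt a)) := by
  intro a
  have hlim := Tendsto.div_sum
    (fun b => tendsto_rpow_mul_rpow_mul_exp_atTop (hr b).ne' (πt b) (Q b) α)
    (by simp [hπt1]) a
  simp only [hπnext]
  simpa [hπt1] using hlim

theorem trust_region_limit_beta
    {A : Type*} [Fintype A] [Nonempty A]
    (πt r : A → ℝ) (hπt : ∀ a, 0 < πt a) (hπt1 : ∑ a, πt a = 1)
    (hr : ∀ a, 0 < r a) (hr1 : ∑ a, r a = 1)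
    (Q : A → ℝ) (α : ℝ) (hα : 0 < α)
    (πnext : ℝ → A → ℝ)
    (hπnext : ∀ β a, πnext β a =
      (r a) ^ (α / (α + β)) * (πt a) ^ (β / (α + β)) * Real.exp (Q a / (α + β))
        / ∑ a', (r a') ^ (α / (α + β)) * (πt a') ^ (β / (α + β)) *
            Real.exp (Q a' / (α + β))) :
    ∀ a, Filter.Tendsto (fun β => πnext β a) Filter.atTop (nhds (πt a)) :=
  trust_region_limit_beta_general πt r hπt1 hr Q α πnext hπnext
end
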